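/- arXiv:2208.11841 — 3 statements merged into one kernel-verified Lean document; each statement's English description precedes it below -/
import Mathlib

section
/- Let T₁, T₂ : V → A be O-operators of a pre-Malcev algebra A associated to a bimodule (V; ℓ, 𝔯), and suppose T₂ is invertible. If T₁ and T₂ are compatible, then N = T₁ ∘ T₂^{-1} : A → A is a Nijenhuis operator on A. -/
open TensorProduct

section Defs

variable {F : Type*} [Field F]
variable {A : Type*} [AddCommGroup A] [Module F A]
variable {V : Type*} [AddCommGroup V] [Module F V]

/-- The pre-Malcev identity for a (curried) bilinear product. -/
def PreMalcevFn {A : Type*} [AddCommGroup A] (mul : A → A → A) : Prop :=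
  ∀ x y z t : A,
    mul (mul y z) (mul x t) - mul (mul z y) (mul x t)
      + mul (mul (mul x y) z) t - mul (mul (mul y x) z) t
      - mul (mul z (mul x y)) t + mul (mul z (mul y x)) t
      + mul y (mul (mul x z) t) - mul y (mul (mul z x) t)
      - mul x (mul y (mul z t)) + mul z (mul x (mul y t)) = 0

/-- The semidirect-product multiplication on `A × V`. -/
def sdFn (mul : A →ₗ[F] A →ₗ[F] A) (l r : A →ₗ[F] Module.End F V) :
    A × V → A × V → A × V :=
  fun p q => (mul p.1 q.1, l p.1 q.2 + r q.1 p.2)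

/-- `(V; l, r)` is a bimodule of the pre-Malcev algebra `(A, mul)` iff the semidirect
product `A ⋉ V` is again a pre-Malcev algebra. -/
def IsBimodule (mul : A →ₗ[F] A →ₗ[F] A) (l r : A →ₗ[F] Module.End F V) : Prop :=
  PreMalcevFn (sdFn mul l r)

/-- `T` is an O-operator of `(A, mul)` associated to the bimodule `(V; l, r)`. -/
def IsOOp (mul : A →ₗ[F] A →ₗ[F] A) (l r : A →ₗ[F] Module.End F V)
    (T : V →ₗ[F] A) : Prop :=
  ∀ v w : V, mul (T v) (T w) = T (l (T v) w + r (T w) v)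

/-- Two O-operators are compatible if every linear combination is again an O-operator. -/
def Compatible (mul : A →ₗ[F] A →ₗ[F] A) (l r : A →ₗ[F] Module.End F V)
    (T₁ T₂ : V →ₗ[F] A) : Prop :=
  ∀ k₁ k₂ : F, IsOOp mul l r (k₁ • T₁ + k₂ • T₂)

/-- `N` is a Nijenhuis operator for the product `mul`. -/
def IsNijenhuisFn (mul : A → A → A) (N : A →ₗ[F] A) : Prop :=
  ∀ x y : A, mul (N x) (N y) = N (mul (N x) y + mul x (N y) - N (mul x y))

/-- The dual map `ℓ* : A → End(V*)`, `⟨ℓ*_x ξ, v⟩ = -⟨ξ, ℓ_x v⟩`. -/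
def dualRep (l : A →ₗ[F] Module.End F V) :
    A →ₗ[F] Module.End F (Module.Dual F V) where
  toFun x := -(l x).dualMap
  map_add' x y := by ext ξ v; simp; abel
  map_smul' c x := by ext ξ v; simp

/-- The map `ℓ* - 𝔯* : A → End(V*)`, i.e. `x ↦ ℓ*_x - 𝔯*_x`; it is equal to
`dualRep l - dualRep r`. -/
def dualRepSub (l r : A →ₗ[F] Module.End F V) :
    A →ₗ[F] Module.End F (Module.Dual F V) where
  toFun x := -(l x).dualMap - -((r x).dualMap)
  map_add' x y := by ext ξ v; simp; abel
  map_smul' c x := by ext ξ v; simp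

/-- The map `-𝔯* : A → End(V*)`, i.e. `x ↦ -(𝔯*_x)`; it is equal to `-(dualRep r)`. -/
def dualRepNeg (r : A →ₗ[F] Module.End F V) :
    A →ₗ[F] Module.End F (Module.Dual F V) where
  toFun x := -(-((r x).dualMap))
  map_add' x y := by ext ξ v; simp
  map_smul' c x := by ext ξ v; simp

/-- The semidirect-product multiplication as a bundled bilinear map. -/
def sdMul (mul : A →ₗ[F] A →ₗ[F] A) (l r : A →ₗ[F] Module.End F V) :
    (A × V) →ₗ[F] (A × V) →ₗ[F] (A × V) :=
  LinearMap.mk₂ F (sdFn mul l r)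
    (fun p p' q => by
      apply Prod.ext <;> simp [sdFn, map_add] <;> abel)
    (fun c p q => by
      apply Prod.ext <;> simp [sdFn, map_smul, smul_add])
    (fun p q q' => by
      apply Prod.ext <;> simp [sdFn, map_add] <;> abel)
    (fun c p q => by
      apply Prod.ext <;> simp [sdFn, map_smul, smul_add])

/-- The left-hand side `-r₁₂·r₁₃ + r₁₂·r₂₃ + [r₁₃, r₂₃]` of the analogue of the
classical Yang-Baxter equation on a pre-Malcev algebra `(B, mul)`. -/
noncomputable def cybeLHS {B : Type*} [AddCommGroup B] [Module F B]
    (mul : B →ₗ[F] B →ₗ[F] B) (r : B ⊗[F] B) : B ⊗[F] (B ⊗[F] B) :=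
  -(TensorProduct.map (TensorProduct.lift mul) LinearMap.id
      (TensorProduct.tensorTensorTensorComm F B B B B (r ⊗ₜ[F] r)))
  + TensorProduct.map LinearMap.id (TensorProduct.map (TensorProduct.lift mul) LinearMap.id)
      (TensorProduct.map LinearMap.id (TensorProduct.assoc F B B B).symm.toLinearMap
        (TensorProduct.assoc F B B (B ⊗[F] B) (r ⊗ₜ[F] r)))
  + TensorProduct.map LinearMap.id (TensorProduct.map LinearMap.id
      (TensorProduct.lift mul - TensorProduct.lift mul ∘ₗ (TensorProduct.comm F B B).toLinearMap))
      (TensorProduct.assoc F B B (B ⊗[F] B)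
        (TensorProduct.tensorTensorTensorComm F B B B B (r ⊗ₜ[F] r)))

/-- `r` is a solution of the analogue of the CYBE on `(B, mul)`. -/
noncomputable def IsCYBE {B : Type*} [AddCommGroup B] [Module F B]
    (mul : B →ₗ[F] B →ₗ[F] B) (r : B ⊗[F] B) : Prop :=
  cybeLHS mul r = 0

/-- The linear map `T_r : A* → A` associated to `r ∈ A ⊗ A`,
`⟨f, T_r g⟩ = ⟨f ⊗ g, r⟩`. -/
noncomputable def trMap (r : A ⊗[F] A) : Module.Dual F A →ₗ[F] A :=
  dualTensorHom F (Module.Dual F A) A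
    (TensorProduct.map (Module.Dual.eval F A) LinearMap.id
      (TensorProduct.comm F A A r))

/-- The product `⋄^T` on `V` induced by a linear map `T : V → A`. -/
def dia (l r : A →ₗ[F] Module.End F V) (T : V →ₗ[F] A) : V → V → V :=
  fun u v => l (T u) v + r (T v) u

/-- The deformation `⋄^T_S` of `⋄^T` by `S`. -/
def diaS (l r : A →ₗ[F] Module.End F V) (T : V →ₗ[F] A) (S : V →ₗ[F] V) : V → V → V :=
  fun u v => dia l r T (S u) v + dia l r T u (S v) - S (dia l r T u v)

/-- `(N, S)` is a Nijenhuis pair on `(A, mul)` with bimodule `(V; l, r)`. -/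
def IsNijPair (mul : A →ₗ[F] A →ₗ[F] A) (l r : A →ₗ[F] Module.End F V)
    (N : A →ₗ[F] A) (S : V →ₗ[F] V) : Prop :=
  IsNijenhuisFn (fun x y => mul x y) N ∧
  (∀ (x : A) (v : V), l (N x) (S v) = S (l (N x) v + l x (S v) - S (l x v))) ∧
  (∀ (x : A) (v : V), r (N x) (S v) = S (r (N x) v + r x (S v) - S (r x v)))

/-- `(N, S)` is a dual-Nijenhuis pair on `(A, mul)` with bimodule `(V; l, r)`. -/
def IsDualNijPair (mul : A →ₗ[F] A →ₗ[F] A) (l r : A →ₗ[F] Module.End F V)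
    (N : A →ₗ[F] A) (S : V →ₗ[F] V) : Prop :=
  IsNijenhuisFn (fun x y => mul x y) N ∧
  (∀ (x : A) (v : V), l (N x) (S v) = S (l (N x) v) + l x (S (S v)) - S (l x (S v))) ∧
  (∀ (x : A) (v : V), r (N x) (S v) = S (r (N x) v) + r x (S (S v)) - S (r x (S v)))

/-- `(N, S)` is a perfect Nijenhuis pair. -/
def IsPerfectNijPair (mul : A →ₗ[F] A →ₗ[F] A) (l r : A →ₗ[F] Module.End F V)
    (N : A →ₗ[F] A) (S : V →ₗ[F] V) : Prop :=
  IsNijPair mul l r N S ∧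
  (∀ (x : A) (v : V), S (S (l x v)) + l x (S (S v)) = (2 : F) • S (l x (S v))) ∧
  (∀ (x : A) (v : V), S (S (r x v)) + r x (S (S v)) = (2 : F) • S (r x (S v)))

/-- `(T, N, S)` is an O-N structure on `(A, mul)` with bimodule `(V; l, r)`. -/
def IsONStruct (mul : A →ₗ[F] A →ₗ[F] A) (l r : A →ₗ[F] Module.End F V)
    (T : V →ₗ[F] A) (N : A →ₗ[F] A) (S : V →ₗ[F] V) : Prop :=
  IsOOp mul l r T ∧ IsNijPair mul l r N S ∧ N ∘ₗ T = T ∘ₗ S ∧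
  ∀ u v : V, dia l r (N ∘ₗ T) u v = diaS l r T S u v

/-- `(T, N, S)` is an O-dual-N structure on `(A, mul)` with bimodule `(V; l, r)`. -/
def IsODualNStruct (mul : A →ₗ[F] A →ₗ[F] A) (l r : A →ₗ[F] Module.End F V)
    (T : V →ₗ[F] A) (N : A →ₗ[F] A) (S : V →ₗ[F] V) : Prop :=
  IsOOp mul l r T ∧ IsDualNijPair mul l r N S ∧ N ∘ₗ T = T ∘ₗ S ∧
  ∀ u v : V, dia l r (N ∘ₗ T) u v = diaS l r T S u v

end Defs

/-! Write `x = T₂ v`, `y = T₂ w` and `v ⋄ᵢ w = ℓ_{Tᵢ v} w + 𝔯_{Tᵢ w} v`, so that `N = T₁ ∘ T₂⁻¹`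
sends `x · y = T₂ (v ⋄₂ w)` to `T₁ (v ⋄₂ w)`. Compatibility of `T₁` and `T₂` is exactly the identity
`N x · y + x · N y = T₁ (v ⋄₂ w) + T₂ (v ⋄₁ w)`, so the argument of `N` in the Nijenhuis identity is
`T₂ (v ⋄₁ w)`, which `N` sends to `T₁ (v ⋄₁ w) = N x · N y`. -/

section OOperator

variable {F A V : Type*} [Field F] [AddCommGroup A] [Module F A] [AddCommGroup V] [Module F V]
  {mul : A →ₗ[F] A →ₗ[F] A} {l r : A →ₗ[F] Module.End F V} {T₁ T₂ : V →ₗ[F] A}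

theorem IsOOp.mul_add_mul_of_isOOp_add (h₁ : IsOOp mul l r T₁) (h₂ : IsOOp mul l r T₂)
    (h₁₂ : IsOOp mul l r (T₁ + T₂)) (v w : V) :
    mul (T₁ v) (T₂ w) + mul (T₂ v) (T₁ w)
      = T₁ (l (T₂ v) w + r (T₂ w) v) + T₂ (l (T₁ v) w + r (T₁ w) v) := by
  have h := h₁₂ v w
  have e₁ := h₁ v w
  have e₂ := h₂ v w
  simp only [LinearMap.add_apply, map_add] at h e₁ e₂ ⊢
  linear_combination (norm := abel) h - e₁ - e₂

theorem IsOOp.isNijenhuisFn_comp_symm {T₂ : V ≃ₗ[F] A} (h₁ : IsOOp mul l r T₁)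
    (h₂ : IsOOp mul l r T₂.toLinearMap)
    (hmixed : ∀ v w : V, mul (T₁ v) (T₂ w) + mul (T₂ v) (T₁ w)
      = T₁ (l (T₂ v) w + r (T₂ w) v) + T₂ (l (T₁ v) w + r (T₁ w) v)) :
    IsNijenhuisFn (fun x y => mul x y) (T₁ ∘ₗ T₂.symm.toLinearMap) := by
  intro x y
  obtain ⟨v, rfl⟩ := T₂.surjective x
  obtain ⟨w, rfl⟩ := T₂.surjective y
  have hmul : mul (T₂ v) (T₂ w) = T₂ (l (T₂ v) w + r (T₂ w) v) := h₂ v w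
  simp only [LinearMap.comp_apply, LinearEquiv.coe_coe, LinearEquiv.symm_apply_apply, hmul,
    hmixed, add_sub_cancel_left]
  exact h₁ v w

end OOperator

theorem stmt17_general {F A V : Type*} [Field F]
    [AddCommGroup A] [Module F A] [AddCommGroup V] [Module F V]
    (mul : A →ₗ[F] A →ₗ[F] A)
    (l r : A →ₗ[F] Module.End F V)
    (T₁ : V →ₗ[F] A) (T₂ : V ≃ₗ[F] A)
    (h₁ : IsOOp mul l r T₁) (h₂ : IsOOp mul l r T₂.toLinearMap)
    (hcomp : Compatible mul l r T₁ T₂.toLinearMap) :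
    IsNijenhuisFn (fun x y => mul x y) (T₁ ∘ₗ T₂.symm.toLinearMap) := by
  have hsum : IsOOp mul l r (T₁ + T₂.toLinearMap) := by simpa using hcomp 1 1
  exact h₁.isNijenhuisFn_comp_symm h₂ (h₁.mul_add_mul_of_isOOp_add h₂ hsum)

/-- if `T₁, T₂` are compatible O-operators and `T₂` is invertible, then
`N = T₁ ∘ T₂⁻¹` is a Nijenhuis operator on `A`. -/
theorem stmt17 {F A V : Type*} [Field F] [CharZero F]
    [AddCommGroup A] [Module F A] [AddCommGroup V] [Module F V]
    (mul : A →ₗ[F] A →ₗ[F] A) (hA : PreMalcevFn fun x y => mul x y)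
    (l r : A →ₗ[F] Module.End F V) (hbim : IsBimodule mul l r)
    (T₁ : V →ₗ[F] A) (T₂ : V ≃ₗ[F] A)
    (h₁ : IsOOp mul l r T₁) (h₂ : IsOOp mul l r T₂.toLinearMap)
    (hcomp : Compatible mul l r T₁ T₂.toLinearMap) :
    IsNijenhuisFn (fun x y => mul x y) (T₁ ∘ₗ T₂.symm.toLinearMap) :=
  stmt17_general mul l r T₁ T₂ h₁ h₂ hcomp
end

section
/- Let (T, N, S) be an O-N structure or an O-dual-N structure on a pre-Malcev algebra A with bimodule (V; ℓ, 𝔯). Then T and T ∘ S are compatible O-operators of A; in particular T + T ∘ S is an O-operator. -/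
open TensorProduct

/-! Given `N ∘ T = T ∘ S`, the identity `⋄^{N∘T} = ⋄^T_S` says exactly that
`S (u ⋄^T v) = ℓ_{T u} (S v) + 𝔯_{T v} (S u)`. Together with either kind of Nijenhuis pair
this yields `S u ⋄^T S v = S (u ⋄^{T∘S} v)`, so `T ∘ S` is an O-operator, and the first
identity also matches the mixed terms of `(k₁ T + k₂ T S)(u) · (k₁ T + k₂ T S)(v)`. -/

section OOperator

variable {F A V : Type*} [Field F] [AddCommGroup A] [Module F A] [AddCommGroup V] [Module F V]
  {mul : A →ₗ[F] A →ₗ[F] A} {l r : A →ₗ[F] Module.End F V}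

theorem Compatible.isOOp_add {T₁ T₂ : V →ₗ[F] A} (h : Compatible mul l r T₁ T₂) :
    IsOOp mul l r (T₁ + T₂) := by
  simpa using h 1 1

theorem compatible_of_isOOp {T₁ T₂ : V →ₗ[F] A} (h₁ : IsOOp mul l r T₁)
    (h₂ : IsOOp mul l r T₂)
    (hmixed : ∀ v w : V, mul (T₁ v) (T₂ w) + mul (T₂ v) (T₁ w)
      = T₁ (dia l r T₂ v w) + T₂ (dia l r T₁ v w)) :
    Compatible mul l r T₁ T₂ := by
  intro k₁ k₂ v w
  have e₁ := h₁ v w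
  have e₂ := h₂ v w
  have e₁₂ := hmixed v w
  simp only [dia, map_add, map_smul, LinearMap.add_apply, LinearMap.smul_apply] at e₁ e₂ e₁₂ ⊢
  linear_combination (norm := module) (k₁ * k₁) • e₁ + (k₂ * k₂) • e₂ + (k₁ * k₂) • e₁₂

variable {T : V →ₗ[F] A} {N : A →ₗ[F] A} {S : V →ₗ[F] V}

theorem map_dia_of_dia_comp_eq_diaS (hNT : N ∘ₗ T = T ∘ₗ S)
    (hdia : ∀ u v : V, dia l r (N ∘ₗ T) u v = diaS l r T S u v) (u v : V) :
    S (dia l r T u v) = l (T u) (S v) + r (T v) (S u) := by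
  have h := hdia u v
  simp only [dia, diaS, hNT, LinearMap.comp_apply] at h ⊢
  linear_combination (norm := module) h

theorem IsNijPair.dia_map_map (hS : IsNijPair mul l r N S) (hNT : N ∘ₗ T = T ∘ₗ S)
    (hstar : ∀ u v : V, S (dia l r T u v) = l (T u) (S v) + r (T v) (S u)) (u v : V) :
    dia l r T (S u) (S v) = S (dia l r (T ∘ₗ S) u v) := by
  obtain ⟨-, hl, hr⟩ := hS
  have hNTx (x : V) : N (T x) = T (S x) := LinearMap.congr_fun hNT x
  have h₁ := hl (T u) v
  have h₂ := hr (T v) u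
  have h₃ := congrArg S (hstar u v)
  simp only [dia, hNTx, LinearMap.comp_apply, map_add, map_sub] at h₁ h₂ h₃ ⊢
  linear_combination (norm := module) h₁ + h₂ - h₃

/-- The dual-Nijenhuis conditions and two instances of `hstar` give the difference of the two
sides with opposite signs, so only twice the identity follows directly. -/
theorem IsDualNijPair.dia_map_map [NeZero (2 : F)] (hS : IsDualNijPair mul l r N S)
    (hNT : N ∘ₗ T = T ∘ₗ S)
    (hstar : ∀ u v : V, S (dia l r T u v) = l (T u) (S v) + r (T v) (S u)) (u v : V) :
    dia l r T (S u) (S v) = S (dia l r (T ∘ₗ S) u v) := by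
  obtain ⟨-, hl, hr⟩ := hS
  have hNTx (x : V) : N (T x) = T (S x) := LinearMap.congr_fun hNT x
  have h₁ := hl (T u) v
  have h₂ := hr (T v) u
  have h₃ := hstar u (S v)
  have h₄ := hstar (S u) v
  simp only [dia, hNTx, LinearMap.comp_apply, map_add] at h₁ h₂ h₃ h₄ ⊢
  refine smul_right_injective V (two_ne_zero (α := F)) ?_
  linear_combination (norm := module) h₁ + h₂ - h₃ - h₄

theorem compatible_comp_of_dia_map_map (hT : IsOOp mul l r T)
    (hstar : ∀ u v : V, S (dia l r T u v) = l (T u) (S v) + r (T v) (S u))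
    (hSS : ∀ u v : V, dia l r T (S u) (S v) = S (dia l r (T ∘ₗ S) u v)) :
    Compatible mul l r T (T ∘ₗ S) := by
  refine compatible_of_isOOp hT (fun v w => ?_) (fun v w => ?_)
  · simpa [dia] using (hT (S v) (S w)).trans (congrArg T (hSS v w))
  · have e₁ := hT v (S w)
    have e₂ := hT (S v) w
    have e₃ := congrArg T (hstar v w)
    simp only [dia, map_add, LinearMap.comp_apply] at e₁ e₂ e₃ ⊢
    linear_combination (norm := module) e₁ + e₂ - e₃

end OOperator

theorem stmt18_general {F A V : Type*} [Field F] [CharZero F]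
    [AddCommGroup A] [Module F A] [AddCommGroup V] [Module F V]
    (mul : A →ₗ[F] A →ₗ[F] A)
    (l r : A →ₗ[F] Module.End F V)
    (T : V →ₗ[F] A) (N : A →ₗ[F] A) (S : V →ₗ[F] V)
    (h : IsONStruct mul l r T N S ∨ IsODualNStruct mul l r T N S) :
    Compatible mul l r T (T ∘ₗ S) ∧ IsOOp mul l r (T + T ∘ₗ S) := by
  have hC : Compatible mul l r T (T ∘ₗ S) := by
    rcases h with ⟨hT, hS, hNT, hdia⟩ | ⟨hT, hS, hNT, hdia⟩
    · have hstar := map_dia_of_dia_comp_eq_diaS hNT hdia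
      exact compatible_comp_of_dia_map_map hT hstar (hS.dia_map_map hNT hstar)
    · have hstar := map_dia_of_dia_comp_eq_diaS hNT hdia
      exact compatible_comp_of_dia_map_map hT hstar (hS.dia_map_map hNT hstar)
  exact ⟨hC, hC.isOOp_add⟩

/-- if `(T, N, S)` is an O-N structure or an O-dual-N structure on a
pre-Malcev algebra `A`, then `T` and `T ∘ S` are compatible O-operators; in particular
`T + T ∘ S` is an O-operator. -/
theorem stmt18 {F A V : Type*} [Field F] [CharZero F]
    [AddCommGroup A] [Module F A] [AddCommGroup V] [Module F V]
    (mul : A →ₗ[F] A →ₗ[F] A) (hA : PreMalcevFn fun x y => mul x y)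
    (l r : A →ₗ[F] Module.End F V) (hbim : IsBimodule mul l r)
    (T : V →ₗ[F] A) (N : A →ₗ[F] A) (S : V →ₗ[F] V)
    (h : IsONStruct mul l r T N S ∨ IsODualNStruct mul l r T N S) :
    Compatible mul l r T (T ∘ₗ S) ∧ IsOOp mul l r (T + T ∘ₗ S) :=
  stmt18_general mul l r T N S h
end

section
/- Let (T, N, S) be an O-dual-N structure on a pre-Malcev algebra A with bimodule (V; ℓ, 𝔯), and for k ∈ ℕ set T_k = N^k ∘ T (with T_0 = T). Then every T_k is an O-operator of A associated to (V; ℓ, 𝔯), and for all k, l ∈ ℕ the operators T_k and T_l are compatible. -/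
open TensorProduct

/-!
Write `f_ρ(u, v) = ⁅S, ρ (T u)⁆ v` for `ρ = ℓ, 𝔯`. Since `N ∘ T = T ∘ S`, the identity
`⋄^{N∘T} = ⋄^T_S` says exactly that `f_ℓ(u, v) + f_𝔯(v, u) = 0`, and the dual-Nijenhuis
conditions at `x = T u` say that `f_ρ(S u, v) = f_ρ(u, S v)`; so every polynomial `P` in `S`
can be moved between the two arguments of `f_ρ`. Consequently `S`, and then every polynomial `Q`
in `S`, intertwines `⋄^{T∘P}` with the actions: `Q (u ⋄^{T∘P} v) = ℓ_{T P u} (Q v) + 𝔯_{T P v} (Q u)`.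
Taking `Q = P` turns the O-operator identity of `T` at `(P u, P v)` into that of `T ∘ P`.
Finally `N^k ∘ T = T ∘ S^k`, so `k₁ T_k + k₂ T_l = T ∘ (k₁ S^k + k₂ S^l)`.
-/

open Polynomial

section CommRing

variable {F A V : Type*} [CommRing F] [AddCommGroup A] [Module F A]
  [AddCommGroup V] [Module F V] {S : Module.End F V}

theorem lie_comp_apply_shift {T : V →ₗ[F] A} {N : A →ₗ[F] A} {ρ : A →ₗ[F] Module.End F V}
    (hNT : N ∘ₗ T = T ∘ₗ S)
    (hρ : ∀ (x : A) (v : V), ρ (N x) (S v) = S (ρ (N x) v) + ρ x (S (S v)) - S (ρ x (S v)))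
    (u : V) : ⁅S, (ρ ∘ₗ T) (S u)⁆ = ⁅S, (ρ ∘ₗ T) u⁆ * S := by
  ext v
  have h := hρ (T u) v
  rw [← LinearMap.comp_apply N T, hNT, LinearMap.comp_apply] at h
  simp only [LinearMap.comp_apply, Ring.lie_def, LinearMap.sub_apply, Module.End.mul_apply, h]
  abel

section Shift

variable {φ ψ : V →ₗ[F] Module.End F V}

theorem lie_pow_shift (hφ : ∀ u, ⁅S, φ (S u)⁆ = ⁅S, φ u⁆ * S) (n : ℕ) (u : V) :
    ⁅S, φ ((S ^ n) u)⁆ = ⁅S, φ u⁆ * S ^ n := by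
  induction n generalizing u with
  | zero => rfl
  | succ n ih => rw [pow_succ, Module.End.mul_apply, ih, hφ, mul_assoc, pow_mul_comm']

theorem lie_aeval_shift (hφ : ∀ u, ⁅S, φ (S u)⁆ = ⁅S, φ u⁆ * S) (p : F[X]) (u : V) :
    ⁅S, φ (aeval S p u)⁆ = ⁅S, φ u⁆ * aeval S p := by
  induction p using Polynomial.induction_on' with
  | add p q hp hq =>
    rw [map_add, LinearMap.add_apply, map_add, Ring.lie_def, mul_add, add_mul, add_sub_add_comm,
      ← Ring.lie_def, ← Ring.lie_def, hp, hq, mul_add]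
  | monomial n a =>
    rw [aeval_monomial, ← Algebra.smul_def, LinearMap.smul_apply, map_smul, Ring.lie_def,
      mul_smul_comm, smul_mul_assoc, ← smul_sub, ← Ring.lie_def, lie_pow_shift hφ,
      mul_smul_comm]

variable (hφ : ∀ u, ⁅S, φ (S u)⁆ = ⁅S, φ u⁆ * S) (hψ : ∀ u, ⁅S, ψ (S u)⁆ = ⁅S, ψ u⁆ * S)
  (hrel : ∀ u v, ⁅S, φ u⁆ v + ⁅S, ψ v⁆ u = 0)
include hφ hψ hrel

theorem lie_aeval_add_lie_aeval_eq_zero (p q : F[X]) (u v : V) :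
    ⁅S, φ (aeval S p u)⁆ (aeval S q v) + ⁅S, ψ (aeval S p v)⁆ (aeval S q u) = 0 := by
  simp only [lie_aeval_shift hφ, lie_aeval_shift hψ, Module.End.mul_apply]
  have h := hrel u (aeval S (p * q) v)
  rwa [lie_aeval_shift hψ, map_mul, Module.End.mul_apply, Module.End.mul_apply,
    Module.End.mul_apply] at h

theorem pow_apply_add_apply (p : F[X]) (n : ℕ) (u v : V) :
    (S ^ n) (φ (aeval S p u) v + ψ (aeval S p v) u)
      = φ (aeval S p u) ((S ^ n) v) + ψ (aeval S p v) ((S ^ n) u) := by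
  induction n with
  | zero => rfl
  | succ n ih =>
    have hS : ∀ (x : Module.End F V) (w : V), S (x w) = x (S w) + ⁅S, x⁆ w := fun x w => by
      rw [Ring.lie_def, LinearMap.sub_apply, Module.End.mul_apply, Module.End.mul_apply]
      abel
    have hvanish := lie_aeval_add_lie_aeval_eq_zero hφ hψ hrel p (X ^ n) u v
    rw [aeval_X_pow] at hvanish
    rw [pow_succ', Module.End.mul_apply, ih, map_add, hS (φ _), hS (ψ _), add_add_add_comm,
      hvanish, add_zero, Module.End.mul_apply, Module.End.mul_apply]

theorem aeval_apply_add_apply (p q : F[X]) (u v : V) :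
    aeval S q (φ (aeval S p u) v + ψ (aeval S p v) u)
      = φ (aeval S p u) (aeval S q v) + ψ (aeval S p v) (aeval S q u) := by
  induction q using Polynomial.induction_on' with
  | add q q' hq hq' =>
    simp only [map_add, LinearMap.add_apply] at hq hq' ⊢
    rw [add_add_add_comm, hq, hq']
    abel
  | monomial n a =>
    simp only [aeval_monomial, Module.End.mul_apply, Module.algebraMap_end_apply,
      pow_apply_add_apply hφ hψ hrel, map_smul, smul_add]

end Shift

end CommRing

section Field

variable {F A V : Type*} [Field F] [AddCommGroup A] [Module F A] [AddCommGroup V] [Module F V]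
  {mul : A →ₗ[F] A →ₗ[F] A} {l r : A →ₗ[F] Module.End F V} {T : V →ₗ[F] A} {N : A →ₗ[F] A}
  {S : V →ₗ[F] V}

theorem lie_add_lie_eq_zero_of_dia_eq_diaS (hNT : N ∘ₗ T = T ∘ₗ S)
    (hd : ∀ u v : V, dia l r (N ∘ₗ T) u v = diaS l r T S u v) (u v : V) :
    ⁅S, (l ∘ₗ T) u⁆ v + ⁅S, (r ∘ₗ T) v⁆ u = 0 := by
  have h := hd u v
  simp only [dia, diaS, hNT, LinearMap.comp_apply, map_add] at h
  simp only [LinearMap.comp_apply, Ring.lie_def, LinearMap.sub_apply, Module.End.mul_apply]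
  linear_combination (norm := module) h

theorem IsODualNStruct.isOOp_comp_aeval (h : IsODualNStruct mul l r T N S) (p : F[X]) :
    IsOOp mul l r (T ∘ₗ aeval S p) := by
  obtain ⟨hT, ⟨-, hl, hr⟩, hNT, hd⟩ := h
  intro v w
  simp only [LinearMap.comp_apply]
  rw [hT]
  exact congrArg T (aeval_apply_add_apply (lie_comp_apply_shift hNT hl) (lie_comp_apply_shift hNT hr)
    (lie_add_lie_eq_zero_of_dia_eq_diaS hNT hd) p p v w).symm

end Field

theorem stmt19_general {F A V : Type*} [Field F]
    [AddCommGroup A] [Module F A] [AddCommGroup V] [Module F V]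
    (mul : A →ₗ[F] A →ₗ[F] A)
    (l r : A →ₗ[F] Module.End F V)
    (T : V →ₗ[F] A) (N : A →ₗ[F] A) (S : V →ₗ[F] V)
    (h : IsODualNStruct mul l r T N S) :
    (∀ k : ℕ, IsOOp mul l r ((N ^ k) ∘ₗ T))
    ∧ (∀ k m : ℕ, Compatible mul l r ((N ^ k) ∘ₗ T) ((N ^ m) ∘ₗ T)) := by
  have hTk (k : ℕ) : (N ^ k) ∘ₗ T = T ∘ₗ aeval S (X ^ k : F[X]) := by
    rw [aeval_X_pow]
    exact Module.End.commute_pow_left_of_commute h.2.2.1 k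
  refine ⟨fun k => hTk k ▸ h.isOOp_comp_aeval _, fun k m k₁ k₂ => ?_⟩
  have hcomb : k₁ • ((N ^ k) ∘ₗ T) + k₂ • ((N ^ m) ∘ₗ T)
      = T ∘ₗ aeval S (k₁ • X ^ k + k₂ • X ^ m : F[X]) := by
    rw [hTk, hTk, map_add, map_smul, map_smul, LinearMap.comp_add, LinearMap.comp_smul,
      LinearMap.comp_smul]
  exact hcomb ▸ h.isOOp_comp_aeval _

/-- if `(T, N, S)` is an O-dual-N structure, then every `T_k = N^k ∘ T` is
an O-operator and any two of them are compatible. -/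
theorem stmt19 {F A V : Type*} [Field F] [CharZero F]
    [AddCommGroup A] [Module F A] [AddCommGroup V] [Module F V]
    (mul : A →ₗ[F] A →ₗ[F] A) (hA : PreMalcevFn fun x y => mul x y)
    (l r : A →ₗ[F] Module.End F V) (hbim : IsBimodule mul l r)
    (T : V →ₗ[F] A) (N : A →ₗ[F] A) (S : V →ₗ[F] V)
    (h : IsODualNStruct mul l r T N S) :
    (∀ k : ℕ, IsOOp mul l r ((N ^ k) ∘ₗ T))
    ∧ (∀ k m : ℕ, Compatible mul l r ((N ^ k) ∘ₗ T) ((N ^ m) ∘ₗ T)) :=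
  stmt19_general mul l r T N S h
end
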